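/- Let U be an n-dimensional real vector space with a complete flag (Fⱼ), W a subspace with jump set e, and Uₑ := span{Xⱼ : j ∈ e} where Xⱼ ∈ Fⱼ \ Fⱼ₋₁. Then for every i ∉ e (i ∈ {1,…,n}), one has W + F_{i-1} = W ⊕ (Uₑ ∩ F_{i-1}) as an (internal) direct sum. -/

import Mathlib

/-!
Write `Sₘ` for the span of the `Xⱼ` with `j ∈ e`, `j ≤ m`. Since `Fₘ₊₁ = Fₘ + ℝ Xₘ₊₁`, induction
on `m` gives `W + Fₘ = W + Sₘ` (a non-jump adds nothing modulo `W`, a jump adds `Xₘ₊₁` on both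
sides) and `W ∩ Sₘ = 0` (at a jump `Xₘ₊₁ ∉ W + Fₘ ⊇ W + Sₘ`). Finally `Uₑ ∩ Fₖ = Sₖ`: going down
from `Uₑ = Sₙ`, each `Xₘ₊₁` with `m ≥ k` lies outside `Fₘ ⊇ Sₘ`, so by the modular law it
contributes nothing to the intersection with `Fₘ`, hence with `Fₖ`.
-/

open Module Set Submodule

namespace Submodule

variable {K V : Type*} [DivisionRing K] [AddCommGroup V] [Module K V]

theorem sup_span_singleton_inf_eq_of_le {A B : Submodule K V} {v : V} (hAB : A ≤ B) (hv : v ∉ B) :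
    (A ⊔ K ∙ v) ⊓ B = A := by
  have hv0 : v ≠ 0 := by rintro rfl; exact hv B.zero_mem
  rw [sup_inf_assoc_of_le _ hAB, ((disjoint_span_singleton' hv0).mpr hv).symm.eq_bot, sup_bot_eq]

theorem disjoint_sup_span_singleton {W A : Submodule K V} {v : V} (hWA : Disjoint W A)
    (hv : v ∉ W ⊔ A) : Disjoint W (A ⊔ K ∙ v) := by
  have hv0 : v ≠ 0 := by rintro rfl; exact hv (zero_mem _)
  exact hWA.disjoint_sup_right_of_disjoint_sup_left ((disjoint_span_singleton' hv0).mpr hv)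

theorem sup_span_singleton_eq_of_finrank_le {A B : Submodule K V} [FiniteDimensional K B] {v : V}
    (hAB : A ≤ B) (hvB : v ∈ B) (hvA : v ∉ A) (hrank : finrank K B ≤ finrank K A + 1) :
    A ⊔ K ∙ v = B := by
  have hle : A ⊔ K ∙ v ≤ B := sup_le hAB ((span_singleton_le_iff_mem _ _).mpr hvB)
  have hlt : A < A ⊔ K ∙ v := left_lt_sup.mpr (by rwa [span_singleton_le_iff_mem])
  have := Submodule.finiteDimensional_of_le hle
  exact eq_of_le_of_finrank_le hle (by have := finrank_lt_finrank_of_lt hlt; omega)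

end Submodule

section Flag

variable {K V : Type*} [DivisionRing K] [AddCommGroup V] [Module K V]
  {n m k : ℕ} {F : ℕ → Submodule K V} {x : ℕ → V} {W : Submodule K V}

theorem flag_succ_eq_sup_span_singleton (hdim : ∀ j ≤ n, finrank K (F j) = j)
    (hmono : ∀ j < n, F j ≤ F (j + 1)) (hx : ∀ j, 1 ≤ j → j ≤ n → x j ∈ F j ∧ x j ∉ F (j - 1))
    (hm : m < n) : F (m + 1) = F m ⊔ K ∙ x (m + 1) := by
  obtain ⟨hxF, hxF'⟩ := hx (m + 1) (by omega) hm
  rw [Nat.add_sub_cancel] at hxF'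
  have : FiniteDimensional K (F (m + 1)) := Module.finite_of_finrank_pos (by rw [hdim _ hm]; omega)
  refine (sup_span_singleton_eq_of_finrank_le (hmono m hm) hxF hxF' ?_).symm
  rw [hdim _ hm, hdim _ hm.le]

theorem flag_zero_eq_bot (hdim : ∀ j ≤ n, finrank K (F j) = j) (hmono : ∀ j < n, F j ≤ F (j + 1))
    (hn : 0 < n) : F 0 = ⊥ := by
  have : FiniteDimensional K (F 1) := Module.finite_of_finrank_pos (by rw [hdim 1 hn]; omega)
  have := Submodule.finiteDimensional_of_le (hmono 0 hn)
  exact finrank_eq_zero.mp (hdim 0 n.zero_le)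

def jumpSet (F : ℕ → Submodule K V) (W : Submodule K V) (n : ℕ) : Set ℕ :=
  {j | 1 ≤ j ∧ j ≤ n ∧ ¬ F j ≤ W ⊔ F (j - 1)}

theorem jumpSet_inter_Iic_zero : jumpSet F W n ∩ Iic 0 = ∅ :=
  eq_empty_of_forall_notMem fun j ⟨⟨hj, _⟩, hj0⟩ => by simp at hj0; omega

theorem jumpSet_inter_Iic_self : jumpSet F W n ∩ Iic n = jumpSet F W n :=
  inter_eq_left.mpr fun _ hj => hj.2.1

theorem span_image_inter_Iic_succ_of_mem {e : Set ℕ} (h : m + 1 ∈ e) :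
    span K (x '' (e ∩ Iic (m + 1))) = span K (x '' (e ∩ Iic m)) ⊔ K ∙ x (m + 1) := by
  rw [← Order.succ_eq_add_one, Order.Iic_succ, Order.succ_eq_add_one, inter_insert_of_mem h,
    image_insert_eq, span_insert, sup_comm]

theorem span_image_inter_Iic_succ_of_notMem {e : Set ℕ} (h : m + 1 ∉ e) :
    span K (x '' (e ∩ Iic (m + 1))) = span K (x '' (e ∩ Iic m)) := by
  rw [← Order.succ_eq_add_one, Order.Iic_succ, Order.succ_eq_add_one, inter_insert_of_notMem h]

variable (hF : ∀ m < n, F (m + 1) = F m ⊔ K ∙ x (m + 1))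
include hF

theorem flag_mono (hkm : k ≤ m) (hm : m ≤ n) : F k ≤ F m := by
  induction m, hkm using Nat.le_induction with
  | base => exact le_rfl
  | succ m _ ih => exact (ih (by omega)).trans (hF m hm ▸ le_sup_left)

theorem span_jumpSet_le (hm : m ≤ n) : span K (x '' (jumpSet F W n ∩ Iic m)) ≤ F m := by
  rw [span_le]
  rintro _ ⟨j, ⟨⟨hj, hjn, -⟩, hjm⟩, rfl⟩
  obtain ⟨i, rfl⟩ := Nat.exists_eq_add_of_le' hj
  exact flag_mono hF hjm hm (hF i hjn ▸ mem_sup_right (mem_span_singleton_self _))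

theorem sup_flag_eq_sup_span_jumpSet (hF0 : F 0 = ⊥) (hm : m ≤ n) :
    W ⊔ F m = W ⊔ span K (x '' (jumpSet F W n ∩ Iic m)) := by
  induction m with
  | zero => rw [hF0, jumpSet_inter_Iic_zero, image_empty, span_empty]
  | succ m ih =>
    by_cases h : m + 1 ∈ jumpSet F W n
    · rw [span_image_inter_Iic_succ_of_mem h, hF m hm, ← sup_assoc, ih (by omega), sup_assoc]
    · have hle : F (m + 1) ≤ W ⊔ F m := by_contra fun h' => h ⟨by omega, hm, h'⟩
      rw [span_image_inter_Iic_succ_of_notMem h, ← ih (by omega)]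
      exact le_antisymm (sup_le le_sup_left hle) (sup_le_sup_left (flag_mono hF (by omega) hm) W)

theorem disjoint_span_jumpSet : Disjoint W (span K (x '' (jumpSet F W n ∩ Iic m))) := by
  induction m with
  | zero => rw [jumpSet_inter_Iic_zero, image_empty, span_empty]; exact disjoint_bot_right
  | succ m ih =>
    by_cases h : m + 1 ∈ jumpSet F W n
    · rw [span_image_inter_Iic_succ_of_mem h]
      obtain ⟨-, hm, hjump⟩ := h
      refine disjoint_sup_span_singleton ih fun hxW => hjump ?_
      rw [Nat.add_sub_cancel, hF m hm]
      have hxWF : x (m + 1) ∈ W ⊔ F m := sup_le_sup_left (span_jumpSet_le hF (by omega)) W hxW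
      exact sup_le le_sup_right ((span_singleton_le_iff_mem _ _).mpr hxWF)
    · rwa [span_image_inter_Iic_succ_of_notMem h]

theorem span_jumpSet_inf_flag (hx : ∀ m < n, x (m + 1) ∉ F m) (hkm : k ≤ m) (hm : m ≤ n) :
    span K (x '' (jumpSet F W n ∩ Iic m)) ⊓ F k = span K (x '' (jumpSet F W n ∩ Iic k)) := by
  induction m, hkm using Nat.le_induction with
  | base => exact inf_eq_left.mpr (span_jumpSet_le hF hm)
  | succ m hkm ih =>
    have hstep : span K (x '' (jumpSet F W n ∩ Iic (m + 1))) ⊓ F m =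
        span K (x '' (jumpSet F W n ∩ Iic m)) := by
      by_cases h : m + 1 ∈ jumpSet F W n
      · rw [span_image_inter_Iic_succ_of_mem h]
        exact sup_span_singleton_inf_eq_of_le (span_jumpSet_le hF (by omega)) (hx m hm)
      · rw [span_image_inter_Iic_succ_of_notMem h]
        exact inf_eq_left.mpr (span_jumpSet_le hF (by omega))
    rw [← inf_eq_right.mpr (flag_mono hF hkm (by omega)), ← inf_assoc, hstep, ih (by omega)]

end Flag

open Module in
theorem stmt_9_general {U : Type*} [AddCommGroup U] [Module ℝ U]
    (n : ℕ)
    (F : ℕ → Submodule ℝ U)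
    (hdim : ∀ j ≤ n, finrank ℝ (F j) = j)
    (hmono : ∀ j < n, F j ≤ F (j + 1))
    (W : Submodule ℝ U)
    (X : ℕ → U)
    (hX : ∀ j, 1 ≤ j → j ≤ n → X j ∈ F j ∧ X j ∉ F (j - 1))
    (e : Set ℕ) (he : e = {j | 1 ≤ j ∧ j ≤ n ∧ ¬ F j ≤ W ⊔ F (j - 1)})
    (Ue : Submodule ℝ U) (hUe : Ue = Submodule.span ℝ (X '' e)) :
    ∀ i, 1 ≤ i → i ≤ n → i ∉ e →
      W ⊔ F (i - 1) = W ⊔ (Ue ⊓ F (i - 1)) ∧ W ⊓ (Ue ⊓ F (i - 1)) = ⊥ := by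
  rintro i hi hin -
  obtain ⟨k, rfl⟩ := Nat.exists_eq_add_of_le' hi
  have hF (m : ℕ) (hm : m < n) : F (m + 1) = F m ⊔ ℝ ∙ X (m + 1) :=
    flag_succ_eq_sup_span_singleton hdim hmono hX hm
  have hXF (m : ℕ) (hm : m < n) : X (m + 1) ∉ F m := by
    simpa using (hX (m + 1) (by omega) hm).2
  obtain rfl : e = jumpSet F W n := he
  subst hUe
  rw [Nat.add_sub_cancel, ← jumpSet_inter_Iic_self, span_jumpSet_inf_flag hF hXF (by omega) le_rfl]
  exact ⟨sup_flag_eq_sup_span_jumpSet hF (flag_zero_eq_bot hdim hmono (by omega)) (by omega),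
    disjoint_span_jumpSet hF |>.eq_bot⟩

open Module in
/-- With a complete flag `(Fⱼ)`, a subspace `W` with jump set `e`,
`Xⱼ ∈ Fⱼ \ Fⱼ₋₁`, and `Uₑ = span{Xⱼ : j ∈ e}`: for every `i ∈ {1,…,n}` with
`i ∉ e`, one has `W + F_{i-1} = W ⊕ (Uₑ ∩ F_{i-1})` (internal direct sum). -/
theorem stmt_9 {U : Type*} [AddCommGroup U] [Module ℝ U] [FiniteDimensional ℝ U]
    (n : ℕ) (hn : finrank ℝ U = n)
    (F : ℕ → Submodule ℝ U)
    (hdim : ∀ j ≤ n, finrank ℝ (F j) = j)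
    (hmono : ∀ j < n, F j ≤ F (j + 1))
    (htop : F n = ⊤)
    (W : Submodule ℝ U)
    (X : ℕ → U)
    (hX : ∀ j, 1 ≤ j → j ≤ n → X j ∈ F j ∧ X j ∉ F (j - 1))
    (e : Set ℕ) (he : e = {j | 1 ≤ j ∧ j ≤ n ∧ ¬ F j ≤ W ⊔ F (j - 1)})
    (Ue : Submodule ℝ U) (hUe : Ue = Submodule.span ℝ (X '' e)) :
    ∀ i, 1 ≤ i → i ≤ n → i ∉ e →
      W ⊔ F (i - 1) = W ⊔ (Ue ⊓ F (i - 1)) ∧ W ⊓ (Ue ⊓ F (i - 1)) = ⊥ :=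
  stmt_9_general n F hdim hmono W X hX e he Ue hUe
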